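/- Let Q be a self-adjoint Markov operator on L^2(S, π) (so its spectrum is contained in [−1,1]) and f ∈ L^2(π) with E_π f = 0. Let ρ_f denote the spectral measure of f with respect to Q, and S_n = Σ_{i=1}^n f(ξ_i) for the associated stationary chain. Then the following are equivalent: (a) the sequence Σ_{k=1}^n E_π(f Q^k f) is bounded; (b) sup_n E S_n^2 / n < ∞; (c) ∫_{[−1,1]} (1−t)^{−1} dρ_f(t) < ∞. -/

import Mathlib

/-!
Everything is a statement about the moments `m k = ∫ t ^ k dρ`, and `E S_n²` is the Toeplitz sum
`∑_{i,j ≤ n} m |i - j|`. This sum grows by `2 ∑_{k=1}^n m k + m 0` from `n` to `n + 1`, so bounded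
partial sums give (a) ⇒ (b). Integrated against `ρ`, it becomes the kernel
`K_n(t) = ∑_{i,j ≤ n} t ^ |i - j| = g_n² + (1 - t²) ∑_{m < n} g_m²` (`g_m` the geometric sum), which is
nonnegative on `[-1, 1]` and, by Cesàro, satisfies `K_n(t) / n → (1 + t) / (1 - t)` for `|t| < 1`;
Fatou's lemma then gives (b) ⇒ (c). Finally `|∑_{k=1}^n t ^ k| = |t - t ^ (n+1)| / (1 - t) ≤ 2 / (1 - t)`
bounds the partial sums in (a) by `2 ∫ (1 - t)⁻¹ dρ`, which is (c) ⇒ (a).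
-/

open MeasureTheory Finset Filter
open scoped ENNReal Topology

section Toeplitz

variable {M : Type*} [AddCommMonoid M]

def toeplitzSum (F : ℕ → M) (n : ℕ) : M :=
  ∑ i ∈ Icc 1 n, ∑ j ∈ Icc 1 n, F ((i : ℤ) - (j : ℤ)).natAbs

@[simp]
theorem toeplitzSum_zero (F : ℕ → M) : toeplitzSum F 0 = 0 := by
  simp [toeplitzSum]

theorem sum_Icc_natAbs_sub_add_one (F : ℕ → M) (n : ℕ) :
    ∑ i ∈ Icc 1 n, F ((i : ℤ) - ((n + 1 : ℕ) : ℤ)).natAbs = ∑ k ∈ Icc 1 n, F k := by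
  refine sum_nbij' (fun i => n + 1 - i) (fun k => n + 1 - k) ?_ ?_ ?_ ?_ ?_ <;>
    intro i hi <;> simp only [mem_Icc] at hi ⊢ <;> first | omega | (congr 1; omega)

theorem toeplitzSum_succ (F : ℕ → M) (n : ℕ) :
    toeplitzSum F (n + 1) = toeplitzSum F n + 2 • ∑ k ∈ Icc 1 n, F k + F 0 := by
  have hsymm : ∀ j : ℕ, (((n + 1 : ℕ) : ℤ) - j).natAbs = ((j : ℤ) - ((n + 1 : ℕ) : ℤ)).natAbs :=
    fun j => by omega
  simp only [toeplitzSum, sum_Icc_succ_top (Nat.le_add_left 1 n), sum_add_distrib, hsymm,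
    sum_Icc_natAbs_sub_add_one, sub_self, Int.natAbs_zero, two_nsmul, add_assoc]

theorem toeplitzSum_div_le_of_abs_sum_Icc_le {F : ℕ → ℝ} {C : ℝ}
    (hC : ∀ n, |∑ k ∈ Icc 1 n, F k| ≤ C) (n : ℕ) :
    toeplitzSum F n / n ≤ |F 0| + 2 * C := by
  have hC0 : 0 ≤ C := (abs_nonneg _).trans (hC 0)
  have hle : ∀ n : ℕ, toeplitzSum F n ≤ n * (|F 0| + 2 * C) := by
    intro n
    induction n with
    | zero => simp
    | succ n ih =>
      rw [toeplitzSum_succ, two_nsmul]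
      push_cast
      linarith [le_abs_self (F 0), (abs_le.1 (hC n)).2]
  rcases n.eq_zero_or_pos with rfl | hn
  · simp only [toeplitzSum_zero, Nat.cast_zero, div_zero]
    positivity
  · rw [div_le_iff₀ (by exact_mod_cast hn), mul_comm]
    exact hle n

end Toeplitz

theorem sum_Icc_one_pow_eq_mul_geom_sum {R : Type*} [Semiring R] (t : R) (n : ℕ) :
    ∑ k ∈ Icc 1 n, t ^ k = t * ∑ k ∈ range n, t ^ k := by
  rw [mul_sum, range_eq_Ico, ← Ico_add_one_right_eq_Icc, ← sum_Ico_add' _ 0 n 1]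
  simp only [pow_succ']

theorem toeplitzSum_pow {R : Type*} [CommRing R] (t : R) (n : ℕ) :
    toeplitzSum (t ^ ·) n = (∑ k ∈ range n, t ^ k) ^ 2
      + (1 - t ^ 2) * ∑ m ∈ range n, (∑ k ∈ range m, t ^ k) ^ 2 := by
  induction n with
  | zero => simp
  | succ n ih =>
    rw [toeplitzSum_succ, ih, sum_Icc_one_pow_eq_mul_geom_sum, geom_sum_succ, sum_range_succ]
    ring

theorem toeplitzSum_pow_nonneg {t : ℝ} (ht : |t| ≤ 1) (n : ℕ) : 0 ≤ toeplitzSum (t ^ ·) n := by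
  have ht2 : 0 ≤ 1 - t ^ 2 := by nlinarith [abs_le.1 ht]
  rw [toeplitzSum_pow]
  positivity

theorem tendsto_toeplitzSum_pow_div {t : ℝ} (ht : |t| < 1) :
    Tendsto (fun n : ℕ => toeplitzSum (t ^ ·) n / n) atTop (𝓝 ((1 + t) / (1 - t))) := by
  have hgeom : Tendsto (fun n : ℕ => (∑ k ∈ range n, t ^ k) ^ 2) atTop (𝓝 ((1 - t)⁻¹ ^ 2)) :=
    (hasSum_geometric_of_abs_lt_one ht).tendsto_sum_nat.pow 2
  have hlim := (hgeom.mul tendsto_inv_atTop_nhds_zero_nat).add (hgeom.cesaro.const_mul (1 - t ^ 2))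
  have hval : (1 - t)⁻¹ ^ 2 * 0 + (1 - t ^ 2) * (1 - t)⁻¹ ^ 2 = (1 + t) / (1 - t) := by
    have : 1 - t ≠ 0 := by linarith [(abs_lt.1 ht).2]
    field_simp
    ring
  rw [← hval]
  refine hlim.congr fun n => ?_
  rw [toeplitzSum_pow, div_eq_mul_inv]
  ring

theorem inv_ofReal_one_sub_le_liminf_toeplitzSum_pow {t : ℝ} (ht : t ∈ Set.Icc (-1) 1) :
    (ENNReal.ofReal (1 - t))⁻¹ ≤
      liminf (fun n : ℕ => ENNReal.ofReal (toeplitzSum (t ^ ·) n / n)) atTop + 1 := by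
  rcases ht.2.eq_or_lt with rfl | ht1
  · have : Tendsto (fun n : ℕ => ENNReal.ofReal (toeplitzSum ((1 : ℝ) ^ ·) n / n)) atTop (𝓝 ⊤) := by
      refine ENNReal.tendsto_nat_nhds_top.congr' ?_
      filter_upwards [eventually_ne_atTop 0] with n hn
      simp [toeplitzSum, hn]
    rw [this.liminf_eq]
    simp
  rcases ht.1.eq_or_lt with rfl | ht0
  · calc (ENNReal.ofReal (1 - -1))⁻¹ ≤ 1 := by norm_num
      _ ≤ _ := le_add_self
  have h1t : 0 < 1 - t := by linarith
  have hlim := ENNReal.tendsto_ofReal (tendsto_toeplitzSum_pow_div (abs_lt.2 ⟨ht0, ht1⟩))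
  rw [hlim.liminf_eq, ← ENNReal.ofReal_inv_of_pos h1t, ← ENNReal.ofReal_one,
    ← ENNReal.ofReal_add (div_nonneg (by linarith) h1t.le) zero_le_one]
  refine ENNReal.ofReal_le_ofReal ?_
  rw [inv_eq_one_div, div_add_one h1t.ne', div_le_div_iff_of_pos_right h1t]
  linarith

theorem abs_sum_Icc_pow_le {t : ℝ} (ht : t ∈ Set.Ico (-1) 1) (n : ℕ) :
    |∑ k ∈ Icc 1 n, t ^ k| ≤ 2 / (1 - t) := by
  have h1t : 0 < 1 - t := by linarith [ht.2]
  have hpow : |t ^ (n + 1)| ≤ 1 := by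
    rw [abs_pow]; exact pow_le_one₀ (abs_nonneg t) (abs_le.2 ⟨ht.1, ht.2.le⟩)
  rw [← Ico_add_one_right_eq_Icc, geom_sum_Ico' ht.2.ne (by omega), pow_one, abs_div,
    abs_of_pos h1t]
  gcongr
  linarith [abs_sub t (t ^ (n + 1)), abs_le.2 ⟨ht.1, ht.2.le⟩]

theorem ofReal_abs_sum_Icc_pow_le {t : ℝ} (ht : t ∈ Set.Icc (-1) 1) (n : ℕ) :
    ENNReal.ofReal |∑ k ∈ Icc 1 n, t ^ k| ≤ 2 * (ENNReal.ofReal (1 - t))⁻¹ := by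
  rcases ht.2.eq_or_lt with rfl | ht1
  · simp
  have h1t : 0 < 1 - t := by linarith
  rw [← ENNReal.ofReal_inv_of_pos h1t, ← ENNReal.ofReal_ofNat 2,
    ← ENNReal.ofReal_mul zero_le_two, ← div_eq_mul_inv]
  exact ENNReal.ofReal_le_ofReal (abs_sum_Icc_pow_le ⟨ht.1, ht1⟩ n)

section Moments

variable {ρ : Measure ℝ} [IsFiniteMeasure ρ] (hρ : ∀ᵐ t ∂ρ, t ∈ Set.Icc (-1 : ℝ) 1)
include hρ

theorem integrable_pow_of_ae_mem_Icc (k : ℕ) : Integrable (fun t : ℝ => t ^ k) ρ := by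
  refine .of_bound (by fun_prop) 1 ?_
  filter_upwards [hρ] with t ht
  rw [norm_pow, Real.norm_eq_abs]
  exact pow_le_one₀ (abs_nonneg t) (abs_le.2 ht)

theorem integrable_toeplitzSum_pow (n : ℕ) : Integrable (fun t : ℝ => toeplitzSum (t ^ ·) n) ρ :=
  integrable_finsetSum _ fun _ _ => integrable_finsetSum _ fun _ _ =>
    integrable_pow_of_ae_mem_Icc hρ _

theorem integral_toeplitzSum_pow (n : ℕ) :
    ∫ t, toeplitzSum (t ^ ·) n ∂ρ = toeplitzSum (fun k => ∫ t, t ^ k ∂ρ) n := by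
  simp only [toeplitzSum]
  rw [integral_finsetSum _ fun i _ =>
    integrable_finsetSum _ fun j _ => integrable_pow_of_ae_mem_Icc hρ _]
  exact sum_congr rfl fun i _ =>
    integral_finsetSum _ fun j _ => integrable_pow_of_ae_mem_Icc hρ _

variable {m : ℕ → ℝ} (hm : ∀ k, m k = ∫ t, t ^ k ∂ρ)
include hm

theorem lintegral_inv_one_sub_lt_top_of_toeplitzSum_div_le {C : ℝ}
    (hC : ∀ n : ℕ, 1 ≤ n → toeplitzSum m n / n ≤ C) :
    ∫⁻ t, (ENNReal.ofReal (1 - t))⁻¹ ∂ρ < ⊤ := by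
  obtain rfl : m = fun k => ∫ t, t ^ k ∂ρ := funext hm
  set G : ℕ → ℝ → ℝ≥0∞ := fun n t => ENNReal.ofReal (toeplitzSum (t ^ ·) n / n)
  have hG : ∀ n, Measurable (G n) := fun n => by
    simp only [G, toeplitzSum]
    fun_prop
  have hGC : ∀ n : ℕ, 1 ≤ n → ∫⁻ t, G n t ∂ρ ≤ ENNReal.ofReal C := fun n hn => by
    rw [← ofReal_integral_eq_lintegral_ofReal]
    · rw [integral_div, integral_toeplitzSum_pow hρ]
      exact ENNReal.ofReal_le_ofReal (hC n hn)
    · exact (integrable_toeplitzSum_pow hρ n).div_const _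
    · filter_upwards [hρ] with t ht
      exact div_nonneg (toeplitzSum_pow_nonneg (abs_le.2 ht) n) n.cast_nonneg
  calc ∫⁻ t, (ENNReal.ofReal (1 - t))⁻¹ ∂ρ
      ≤ ∫⁻ t, (liminf (fun n => G n t) atTop + 1) ∂ρ := by
        refine lintegral_mono_ae ?_
        filter_upwards [hρ] with t ht
        exact inv_ofReal_one_sub_le_liminf_toeplitzSum_pow ht
    _ = ∫⁻ t, liminf (fun n => G n t) atTop ∂ρ + ρ Set.univ := by
        rw [lintegral_add_right _ measurable_const, lintegral_one]
    _ ≤ ENNReal.ofReal C + ρ Set.univ := by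
        gcongr
        refine (lintegral_liminf_le hG).trans (liminf_le_of_frequently_le ?_)
        exact (eventually_atTop.2 ⟨1, hGC⟩).frequently
    _ < ⊤ := by finiteness

theorem abs_sum_Icc_le_of_lintegral_lt_top
    (hfin : ∫⁻ t, (ENNReal.ofReal (1 - t))⁻¹ ∂ρ < ⊤) (n : ℕ) :
    |∑ k ∈ Icc 1 n, m k| ≤ (2 * ∫⁻ t, (ENNReal.ofReal (1 - t))⁻¹ ∂ρ).toReal := by
  simp only [hm]
  rw [← integral_finsetSum _ fun k _ => integrable_pow_of_ae_mem_Icc hρ k, ← Real.norm_eq_abs]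
  refine (norm_integral_le_lintegral_norm _).trans (ENNReal.toReal_mono (by finiteness) ?_)
  rw [← lintegral_const_mul' _ _ (by norm_num)]
  refine lintegral_mono_ae ?_
  filter_upwards [hρ] with t ht
  exact ofReal_abs_sum_Icc_pow_le ht n

theorem kipnisVaradhan_of_moments :
    ((∃ C : ℝ, ∀ n : ℕ, |∑ k ∈ Icc 1 n, m k| ≤ C) ↔
      (∃ C : ℝ, ∀ n : ℕ, 1 ≤ n → toeplitzSum m n / n ≤ C)) ∧
    ((∃ C : ℝ, ∀ n : ℕ, 1 ≤ n → toeplitzSum m n / n ≤ C) ↔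
      ∫⁻ t, (ENNReal.ofReal (1 - t))⁻¹ ∂ρ < ⊤) := by
  have hab : (∃ C : ℝ, ∀ n : ℕ, |∑ k ∈ Icc 1 n, m k| ≤ C) →
      ∃ C : ℝ, ∀ n : ℕ, 1 ≤ n → toeplitzSum m n / n ≤ C :=
    fun ⟨_, hC⟩ => ⟨_, fun n _ => toeplitzSum_div_le_of_abs_sum_Icc_le hC n⟩
  have hbc : (∃ C : ℝ, ∀ n : ℕ, 1 ≤ n → toeplitzSum m n / n ≤ C) →
      ∫⁻ t, (ENNReal.ofReal (1 - t))⁻¹ ∂ρ < ⊤ :=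
    fun ⟨_, hC⟩ => lintegral_inv_one_sub_lt_top_of_toeplitzSum_div_le hρ hm hC
  have hca : ∫⁻ t, (ENNReal.ofReal (1 - t))⁻¹ ∂ρ < ⊤ →
      ∃ C : ℝ, ∀ n : ℕ, |∑ k ∈ Icc 1 n, m k| ≤ C :=
    fun hfin => ⟨_, abs_sum_Icc_le_of_lintegral_lt_top hρ hm hfin⟩
  exact ⟨⟨hab, hca ∘ hbc⟩, ⟨hbc, hab ∘ hca⟩⟩

end Moments

theorem stmt_18_general {S : Type*} [MeasurableSpace S] (π : Measure S)
    (Q : (S → ℝ) → (S → ℝ))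
    (f : S → ℝ)
    (ρ : Measure ℝ) [IsFiniteMeasure ρ] (hsupp : ρ (Set.Icc (-1 : ℝ) 1)ᶜ = 0)
    (hspec : ∀ k : ℕ, ∫ x, f x * (Q^[k] f) x ∂π = ∫ t, t ^ k ∂ρ) :
    ((∃ C : ℝ, ∀ n : ℕ, |∑ k ∈ Icc 1 n, ∫ x, f x * (Q^[k] f) x ∂π| ≤ C) ↔
      (∃ C : ℝ, ∀ n : ℕ, 1 ≤ n →
        (∑ i ∈ Icc 1 n, ∑ j ∈ Icc 1 n,
          ∫ x, f x * (Q^[((i : ℤ) - (j : ℤ)).natAbs] f) x ∂π) / (n : ℝ) ≤ C)) ∧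
    ((∃ C : ℝ, ∀ n : ℕ, 1 ≤ n →
        (∑ i ∈ Icc 1 n, ∑ j ∈ Icc 1 n,
          ∫ x, f x * (Q^[((i : ℤ) - (j : ℤ)).natAbs] f) x ∂π) / (n : ℝ) ≤ C) ↔
      ∫⁻ t, (ENNReal.ofReal (1 - t))⁻¹ ∂ρ < ⊤) :=
  kipnisVaradhan_of_moments (mem_ae_iff.mpr hsupp) hspec

/-- Kipnis–Varadhan equivalences for a self-adjoint Markov operator `Q`
on `L²(π)` with spectral measure `ρ` of `f` (so `⟨f, Q^k f⟩ = ∫ t^k dρ(t)` and `ρ` lives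
on `[-1,1]`). Here `E S_n²` is expressed, as usual, by
`∑_{i,j=1}^n ⟨f, Q^{|i-j|} f⟩`. The equivalent conditions are:
(a) boundedness of `∑_{k=1}^n ⟨f, Q^k f⟩`; (b) `sup_n E S_n²/n < ∞`;
(c) `∫ (1-t)⁻¹ dρ(t) < ∞`. -/
theorem stmt_18 {S : Type*} [MeasurableSpace S] (π : Measure S) [IsProbabilityMeasure π]
    (Q : (S → ℝ) → (S → ℝ))
    (hQL2 : ∀ g : S → ℝ, MemLp g 2 π → MemLp (Q g) 2 π)
    (hcontr : ∀ g : S → ℝ, MemLp g 2 π → eLpNorm (Q g) 2 π ≤ eLpNorm g 2 π)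
    (hsa : ∀ g h : S → ℝ, MemLp g 2 π → MemLp h 2 π →
      ∫ x, g x * Q h x ∂π = ∫ x, Q g x * h x ∂π)
    (f : S → ℝ) (hf : MemLp f 2 π) (hmean : ∫ x, f x ∂π = 0)
    (ρ : Measure ℝ) [IsFiniteMeasure ρ] (hsupp : ρ (Set.Icc (-1 : ℝ) 1)ᶜ = 0)
    (hspec : ∀ k : ℕ, ∫ x, f x * (Q^[k] f) x ∂π = ∫ t, t ^ k ∂ρ) :
    ((∃ C : ℝ, ∀ n : ℕ, |∑ k ∈ Icc 1 n, ∫ x, f x * (Q^[k] f) x ∂π| ≤ C) ↔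
      (∃ C : ℝ, ∀ n : ℕ, 1 ≤ n →
        (∑ i ∈ Icc 1 n, ∑ j ∈ Icc 1 n,
          ∫ x, f x * (Q^[((i : ℤ) - (j : ℤ)).natAbs] f) x ∂π) / (n : ℝ) ≤ C)) ∧
    ((∃ C : ℝ, ∀ n : ℕ, 1 ≤ n →
        (∑ i ∈ Icc 1 n, ∑ j ∈ Icc 1 n,
          ∫ x, f x * (Q^[((i : ℤ) - (j : ℤ)).natAbs] f) x ∂π) / (n : ℝ) ≤ C) ↔
      ∫⁻ t, (ENNReal.ofReal (1 - t))⁻¹ ∂ρ < ⊤) :=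
  stmt_18_general π Q f ρ hsupp hspec
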